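/- arXiv:0712.0790 — 4 statements merged into one kernel-verified Lean document; each statement's English description precedes it below -/
import Mathlib

section
/- One-step contraction of the expected magnetization: for every β ≥ 0 and every n, the magnetization chain (S_t) satisfies: for any two states s ≥ s̃ in Ω_S, 0 ≤ E_s[S_1] − E_{s̃}[S_1] ≤ ρ(s − s̃); and for any two states s, s̃ in Ω_S, |E_s[S_1] − E_{s̃}[S_1]| ≤ ρ|s − s̃|, where ρ = 1 − n^{-1}(1 − n·tanh(β/n)). -/
/-!
Started from `s`, the chain moves by `±2/n`, so
`E_s[S₁] = (1 - 1/n) s + ((1 - s) tanh(β(s + 1/n)) + (1 + s) tanh(β(s - 1/n))) / (2n)`,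
and it suffices to compare neighbouring states `s - 2/n ≤ s`, then telescope. The increment
is `(2/n)(1 - 1/n)` plus `1/(2n)` times a combination, with weights `1 - s` and
`1 + s - 2/n` summing to `2 - 2/n`, of two differences `tanh(x + β/n) - tanh(x - β/n)`.
Each lies in `[0, 2 tanh(β/n)]` since `tanh(m + h) - tanh(m - h) = sinh 2h / (cosh² h + sinh² m)`,
so the increment lies in `[0, (2/n) ρ]` with `ρ = 1 - 1/n + tanh(β/n)`.
-/

open Filter Real

namespace CW

noncomputable section

/-- `p₊(s) = (1 + tanh(βs))/2`. -/
def pPlus (β s : ℝ) : ℝ := (1 + Real.tanh (β * s)) / 2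

/-- `p₋(s) = (1 - tanh(βs))/2`. -/
def pMinus (β s : ℝ) : ℝ := (1 - Real.tanh (β * s)) / 2

/-- The value of the magnetization corresponding to `k` plus spins among `n`
sites: the state space `Ω_S = {-1, -1 + 2/n, …, 1 - 2/n, 1}` is indexed by
`k ∈ {0, 1, …, n}`, with `magVal n k = (2k - n)/n`. -/
def magVal (n : ℕ) (k : Fin (n + 1)) : ℝ := (2 * (k : ℕ) - n) / n

/-- Transition kernel of the magnetization chain of the Curie-Weiss Glauber
dynamics: from `s` move to `s - 2/n` with probability `((1+s)/2) p₋(s - 1/n)`,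
to `s + 2/n` with probability `((1-s)/2) p₊(s + 1/n)`, and stay put
otherwise. -/
def magKernel (β : ℝ) (n : ℕ) (k l : Fin (n + 1)) : ℝ :=
  if (l : ℕ) + 1 = (k : ℕ) then
    ((1 + magVal n k) / 2) * pMinus β (magVal n k - 1 / n)
  else if (k : ℕ) + 1 = (l : ℕ) then
    ((1 - magVal n k) / 2) * pPlus β (magVal n k + 1 / n)
  else if l = k then
    1 - ((1 + magVal n k) / 2) * pMinus β (magVal n k - 1 / n)
      - ((1 - magVal n k) / 2) * pPlus β (magVal n k + 1 / n)
  else 0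

/-- One-step expected magnetization `E_s[S₁]` of the magnetization chain
started from the state `k`. -/
def magE1 (β : ℝ) (n : ℕ) (k : Fin (n + 1)) : ℝ :=
  ∑ l, magKernel β n k l * magVal n l

theorem _root_.Real.tanh_add_sub_tanh_sub (m h : ℝ) :
    tanh (m + h) - tanh (m - h) = 2 * sinh h * cosh h / (cosh h ^ 2 + sinh m ^ 2) := by
  have hprod : cosh (m + h) * cosh (m - h) = cosh h ^ 2 + sinh m ^ 2 := by
    rw [cosh_add, cosh_sub]
    nlinarith [cosh_sq m, cosh_sq h]
  rw [tanh_eq_sinh_div_cosh, tanh_eq_sinh_div_cosh,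
    div_sub_div _ _ (cosh_pos _).ne' (cosh_pos _).ne', ← sinh_sub, hprod,
    show m + h - (m - h) = 2 * h by ring, sinh_two_mul]

theorem _root_.Real.tanh_add_sub_tanh_sub_mem_Icc (m : ℝ) {h : ℝ} (hh : 0 ≤ h) :
    tanh (m + h) - tanh (m - h) ∈ Set.Icc 0 (2 * tanh h) := by
  have hsinh : 0 ≤ sinh h := sinh_nonneg_iff.2 hh
  have hcosh : 0 < cosh h := cosh_pos h
  rw [tanh_add_sub_tanh_sub, tanh_eq_sinh_div_cosh]
  refine ⟨by positivity, ?_⟩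
  rw [div_le_iff₀ (by positivity)]
  field_simp
  nlinarith [mul_nonneg hsinh (sq_nonneg (sinh m))]

theorem _root_.Fintype.sum_ite_mul_eq_of_unique {ι R : Type*} [Fintype ι]
    [NonUnitalNonAssocSemiring R] (P : ι → Prop) [DecidablePred P] (c x : R) (g : ι → R) (huniq : ∀ i j, P i → P j → i = j)
    (hc : (∀ i, ¬ P i) → c = 0) (hg : ∀ i, P i → g i = x) :
    ∑ i, (if P i then c * g i else 0) = c * x := by
  by_cases hP : ∃ i, P i
  · obtain ⟨i, hi⟩ := hP
    rw [Fintype.sum_eq_single i fun j hj => if_neg fun hPj => hj (huniq j i hPj hi), if_pos hi,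
      hg i hi]
  · simp only [not_exists] at hP
    simp [hP, hc hP]

lemma magVal_zero {n : ℕ} (hn : 0 < n) : magVal n 0 = -1 := by
  have : (n : ℝ) ≠ 0 := by positivity
  simp [magVal, this]

lemma magVal_last {n : ℕ} (hn : 0 < n) : magVal n (Fin.last n) = 1 := by
  have : (n : ℝ) ≠ 0 := by positivity
  simp only [magVal, Fin.val_last]
  field_simp
  ring

lemma magVal_eq_add_of_val_add_one {n : ℕ} {k l : Fin (n + 1)} (h : (k : ℕ) + 1 = l) :
    magVal n l = magVal n k + 2 / n := by
  simp only [magVal, ← h]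
  push_cast
  ring

lemma magVal_succ {n : ℕ} (i : Fin n) : magVal n i.succ = magVal n i.castSucc + 2 / n :=
  magVal_eq_add_of_val_add_one (by simp)

lemma magVal_mem_Icc {n : ℕ} (hn : 0 < n) (k : Fin (n + 1)) : magVal n k ∈ Set.Icc (-1) 1 := by
  have hn' : (0 : ℝ) < n := by exact_mod_cast hn
  have hk : ((k : ℕ) : ℝ) ≤ n := by exact_mod_cast k.is_le
  rw [magVal, Set.mem_Icc, le_div_iff₀ hn', div_le_one hn']
  constructor <;> linarith [Nat.cast_nonneg (α := ℝ) (k : ℕ)]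

lemma magVal_strictMono {n : ℕ} (hn : 0 < n) : StrictMono (magVal n) := fun k l hkl => by
  have : ((k : ℕ) : ℝ) < (l : ℕ) := by exact_mod_cast hkl
  unfold magVal
  gcongr

/-- `E_s[S₁] = s + (2/n) (P(s, s + 2/n) - P(s, s - 2/n))`, written out. -/
def expectedNextMag (β : ℝ) (n : ℕ) (s : ℝ) : ℝ :=
  (1 - 1 / n) * s +
    ((1 - s) * tanh (β * (s + 1 / n)) + (1 + s) * tanh (β * (s - 1 / n))) / (2 * n)

theorem magE1_eq_expectedNextMag (β : ℝ) {n : ℕ} (hn : 0 < n) (k : Fin (n + 1)) :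
    magE1 β n k = expectedNextMag β n (magVal n k) := by
  set s := magVal n k
  set down := (1 + s) / 2 * pMinus β (s - 1 / n)
  set up := (1 - s) / 2 * pPlus β (s + 1 / n)
  have hsplit : ∀ l, magKernel β n k l * magVal n l =
      (if (l : ℕ) + 1 = k then down * magVal n l else 0) +
      (if (k : ℕ) + 1 = l then up * magVal n l else 0) +
      (if l = k then (1 - down - up) * magVal n l else 0) := by
    intro l
    simp only [magKernel, Fin.ext_iff]
    split_ifs <;> first | (exfalso; omega) | ring
  have hdown : ∑ l : Fin (n + 1), (if (l : ℕ) + 1 = k then down * magVal n l else 0) =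
      down * (s - 2 / n) := by
    refine Fintype.sum_ite_mul_eq_of_unique _ _ _ _ (fun i j hi hj => Fin.ext (by omega))
      (fun h => ?_) (fun l hl => by simp only [s, magVal_eq_add_of_val_add_one hl]; ring)
    have hk : k = 0 := Fin.ext <| by
      rw [Fin.val_zero]
      by_contra hk
      exact h ⟨(k : ℕ) - 1, by omega⟩ (by dsimp only; omega)
    simp [down, s, hk, magVal_zero hn]
  have hup : ∑ l : Fin (n + 1), (if (k : ℕ) + 1 = l then up * magVal n l else 0) =
      up * (s + 2 / n) := by
    refine Fintype.sum_ite_mul_eq_of_unique _ _ _ _ (fun i j hi hj => Fin.ext (by omega))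
      (fun h => ?_) (fun l hl => magVal_eq_add_of_val_add_one hl)
    have hk : k = Fin.last n := Fin.ext <| by
      rw [Fin.val_last]
      by_contra hk
      exact h ⟨(k : ℕ) + 1, by omega⟩ rfl
    simp [up, s, hk, magVal_last hn]
  rw [magE1, Finset.sum_congr rfl fun l _ => hsplit l, Finset.sum_add_distrib,
    Finset.sum_add_distrib, hdown, hup, Finset.sum_ite_eq']
  simp only [Finset.mem_univ, if_true, expectedNextMag, down, up, pPlus, pMinus]
  ring

theorem expectedNextMag_sub_expectedNextMag_mem_Icc {β : ℝ} (hβ : 0 ≤ β) {n : ℕ} (hn : 0 < n)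
    {s : ℝ} (hs : s ≤ 1) (hs' : -1 ≤ s - 2 / n) :
    expectedNextMag β n s - expectedNextMag β n (s - 2 / n) ∈
      Set.Icc 0 ((1 - 1 / n + tanh (β / n)) * (2 / n)) := by
  have hn1 : (1 : ℝ) ≤ n := by exact_mod_cast hn
  have ht : 0 ≤ tanh (β / n) := by
    simpa using (tanh_add_sub_tanh_sub_mem_Icc 0 (h := β / n) (by positivity)).1
  obtain ⟨hT12, hT12'⟩ := tanh_add_sub_tanh_sub_mem_Icc (β * s) (h := β / n) (by positivity)
  obtain ⟨hT23, hT23'⟩ :=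
    tanh_add_sub_tanh_sub_mem_Icc (β * (s - 2 / n)) (h := β / n) (by positivity)
  rw [show β * s + β / n = β * (s + 1 / n) by ring, show β * s - β / n = β * (s - 1 / n) by ring]
    at hT12 hT12'
  rw [show β * (s - 2 / n) + β / n = β * (s - 1 / n) by ring,
    show β * (s - 2 / n) - β / n = β * (s - 3 / n) by ring] at hT23 hT23'
  set T1 := tanh (β * (s + 1 / n))
  set T2 := tanh (β * (s - 1 / n))
  set T3 := tanh (β * (s - 3 / n))
  have hincr : expectedNextMag β n s - expectedNextMag β n (s - 2 / n) =
      2 * (1 / n) * (1 - 1 / n) +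
        1 / n / 2 * ((1 - s) * (T1 - T2) + (1 + s - 2 * (1 / n)) * (T2 - T3)) := by
    simp only [expectedNextMag]
    rw [show β * (s - 2 / n + 1 / n) = β * (s - 1 / n) by ring,
      show β * (s - 2 / n - 1 / n) = β * (s - 3 / n) by ring]
    ring
  rw [hincr]
  rw [show (2 : ℝ) / n = 2 * (1 / n) by ring] at hs' ⊢
  set h := 1 / (n : ℝ)
  have hh : 0 < h := by positivity
  have hh1 : h ≤ 1 := by rw [div_le_one (by positivity)]; exact hn1
  have hw1 : 0 ≤ 1 - s := by linarith
  have hw2 : 0 ≤ 1 + s - 2 * h := by linarith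
  constructor
  · have : 0 ≤ (1 - s) * (T1 - T2) + (1 + s - 2 * h) * (T2 - T3) := by positivity
    nlinarith
  · nlinarith [mul_le_mul_of_nonneg_left hT12' hw1, mul_le_mul_of_nonneg_left hT23' hw2,
      mul_nonneg (mul_nonneg hh.le hh.le) ht]

theorem magE1_succ_sub_magE1_castSucc_mem_Icc {β : ℝ} (hβ : 0 ≤ β) {n : ℕ} (i : Fin n) :
    magE1 β n i.succ - magE1 β n i.castSucc ∈
      Set.Icc 0 ((1 - 1 / n + tanh (β / n)) * (2 / n)) := by
  have hn := i.pos
  have hprev : magVal n i.castSucc = magVal n i.succ - 2 / n := by rw [magVal_succ]; ring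
  rw [magE1_eq_expectedNextMag β hn, magE1_eq_expectedNextMag β hn, hprev]
  exact expectedNextMag_sub_expectedNextMag_mem_Icc hβ hn (magVal_mem_Icc hn _).2
    (hprev ▸ (magVal_mem_Icc hn _).1)

theorem magE1_sub_magE1_mem_Icc {β : ℝ} (hβ : 0 ≤ β) {n : ℕ} {k k' : Fin (n + 1)} (h : k' ≤ k) :
    magE1 β n k - magE1 β n k' ∈
      Set.Icc 0 ((1 - 1 / n + tanh (β / n)) * (magVal n k - magVal n k')) := by
  have hmono : Monotone (magE1 β n) := Fin.monotone_iff_le_succ.2 fun i => by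
    linarith [(magE1_succ_sub_magE1_castSucc_mem_Icc hβ i).1]
  have hlip : Monotone fun k => (1 - 1 / n + tanh (β / n)) * magVal n k - magE1 β n k :=
    Fin.monotone_iff_le_succ.2 fun i => by
      have := (magE1_succ_sub_magE1_castSucc_mem_Icc hβ i).2
      rw [magVal_succ]
      linarith
  exact ⟨sub_nonneg.2 (hmono h), by linarith [hlip h]⟩

/-- One-step contraction of the expected magnetization: for all `β ≥ 0` and
all `n`, if `s ≥ s̃` then `0 ≤ E_s[S₁] - E_s̃[S₁] ≤ ρ (s - s̃)`, and for all
`s, s̃`, `|E_s[S₁] - E_s̃[S₁]| ≤ ρ |s - s̃|`, where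
`ρ = 1 - n⁻¹(1 - n tanh(β/n))`. -/
theorem mag_chain_contraction (β : ℝ) (hβ : 0 ≤ β) (n : ℕ) :
    (∀ k k' : Fin (n + 1), magVal n k' ≤ magVal n k →
      0 ≤ magE1 β n k - magE1 β n k' ∧
      magE1 β n k - magE1 β n k' ≤
        (1 - (1 / (n : ℝ)) * (1 - n * Real.tanh (β / n))) *
          (magVal n k - magVal n k')) ∧
    (∀ k k' : Fin (n + 1),
      |magE1 β n k - magE1 β n k'| ≤
        (1 - (1 / (n : ℝ)) * (1 - n * Real.tanh (β / n))) *
          |magVal n k - magVal n k'|) := by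
  rcases Nat.eq_zero_or_pos n with rfl | hn
  · refine ⟨fun k k' _ => ?_, fun k k' => ?_⟩ <;>
      obtain rfl : k = k' := Subsingleton.elim (α := Fin 1) _ _ <;> simp
  have hρ : 1 - (1 / (n : ℝ)) * (1 - n * tanh (β / n)) = 1 - 1 / n + tanh (β / n) := by
    field_simp
    ring
  have hordered : ∀ k k' : Fin (n + 1), magVal n k' ≤ magVal n k →
      magE1 β n k - magE1 β n k' ∈
        Set.Icc 0 ((1 - 1 / n + tanh (β / n)) * (magVal n k - magVal n k')) :=
    fun k k' h => magE1_sub_magE1_mem_Icc hβ ((magVal_strictMono hn).le_iff_le.1 h)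
  rw [hρ]
  refine ⟨hordered, fun k k' => ?_⟩
  wlog h : magVal n k' ≤ magVal n k generalizing k k'
  · rw [abs_sub_comm, abs_sub_comm (magVal n k)]
    exact this k' k (le_of_not_ge h)
  rw [abs_of_nonneg (hordered k k' h).1, abs_of_nonneg (sub_nonneg.2 h)]
  exact (hordered k k' h).2

end

end CW
end

section
/- Variance bound for contracting real-valued Markov chains: let (Z_t) be a Markov chain taking values in ℝ with transition kernel P, and suppose there exists 0 < ρ < 1 such that for all pairs of starting states (z, z̃) and all t ≥ 0, |E_z[Z_t] − E_{z̃}[Z_t]| ≤ ρ^t |z − z̃|. Then v_t := sup_{z₀} Var_{z₀}(Z_t) satisfies v_t ≤ v₁ · min{t, (1 − ρ²)^{-1}}. -/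
/-!
For independent `X, Y ∼ μ` one has `E|X - Y|² = 2 Var μ`, and more generally
`E|X - Y|² = Var μ + Var ν + (E X - E Y)²` for independent `X ∼ μ`, `Y ∼ ν`.
Apply this to two independent copies of the chain at time `t + 1`: conditionally on their
positions `u, v` at time `t`, the mean-square distance is `Var(κ u) + Var(κ v) + (m u - m v)²`,
and the contraction bounds the last term by `ρ² (u - v)²`. Averaging over `u, v` gives
`v_{t+1} ≤ v₁ + ρ² v_t`, hence `v_t ≤ v₁ (1 + ρ² + ⋯ + ρ^{2(t-1)}) ≤ v₁ min{t, (1 - ρ²)⁻¹}`.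
Working with the `ℝ≥0∞`-valued `evariance` lets infinite variances through with no side conditions.
-/

open MeasureTheory ProbabilityTheory ENNReal

namespace CW

noncomputable section

/-- The law at time `t` of the time-homogeneous Markov chain on `ℝ` with
transition kernel `κ`, started from `z`. -/
def chainLaw (κ : Kernel ℝ ℝ) : ℕ → ℝ → Measure ℝ
  | 0, z => Measure.dirac z
  | t + 1, z => (chainLaw κ t z).bind (fun x => κ x)

open scoped NNReal

section SqDist

variable {μ ν : Measure ℝ} [IsProbabilityMeasure μ] [IsProbabilityMeasure ν]

lemma integral_sub_const_sq (h : MemLp id 2 ν) (c : ℝ) :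
    ∫ x, (x - c) ^ 2 ∂ν = variance id ν + ((∫ x, x ∂ν) - c) ^ 2 := by
  have hx : Integrable (fun x => x) ν := h.integrable one_le_two
  have hx2 : Integrable (fun x => x ^ 2) ν := h.integrable_sq
  have hexpand : (fun x => (x - c) ^ 2) = fun x => x ^ 2 - 2 * c * x + c ^ 2 := by
    funext x; ring
  have hlin : Integrable (fun x => x ^ 2 - 2 * c * x) ν := hx2.sub (hx.const_mul _)
  have hvar := variance_eq_sub h
  simp only [id, Pi.pow_apply] at hvar
  rw [hexpand, integral_add hlin (integrable_const _),
    integral_sub hx2 (hx.const_mul _), integral_const_mul, integral_const, hvar]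
  simp only [probReal_univ, smul_eq_mul, one_mul]
  ring

lemma lintegral_enorm_sub_sq (c : ℝ) :
    ∫⁻ x, ‖x - c‖ₑ ^ 2 ∂ν = evariance id ν + ‖(∫ x, x ∂ν) - c‖ₑ ^ 2 := by
  have enorm_sq (a : ℝ) : ‖a‖ₑ ^ 2 = ENNReal.ofReal (a ^ 2) := by
    rw [← enorm_pow, Real.enorm_of_nonneg (sq_nonneg a)]
  by_cases h : MemLp id 2 ν
  · have hint : Integrable (fun x => (x - c) ^ 2) ν := (h.sub (memLp_const c)).integrable_sq
    simp_rw [enorm_sq]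
    rw [← ofReal_integral_eq_lintegral_ofReal hint (ae_of_all _ fun x => sq_nonneg _),
      integral_sub_const_sq h, ENNReal.ofReal_add (variance_nonneg _ _) (sq_nonneg _),
      h.ofReal_variance_eq]
  · rw [evariance_eq_top aestronglyMeasurable_id h, top_add]
    by_contra hfin
    refine h ?_
    have hsq : MemLp (fun x => x - c) 2 ν := by
      refine (memLp_two_iff_integrable_sq (by fun_prop)).2 ⟨by fun_prop, ?_⟩
      rw [hasFiniteIntegral_iff_ofReal (ae_of_all _ fun x => sq_nonneg _)]
      simp_rw [← enorm_sq]
      exact lt_top_iff_ne_top.2 hfin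
    convert hsq.add (memLp_const c) using 1
    ext x
    simp

def sqDist (μ ν : Measure ℝ) : ℝ≥0∞ := ∫⁻ x, ∫⁻ y, ‖x - y‖ₑ ^ 2 ∂ν ∂μ

lemma sqDist_eq :
    sqDist μ ν = evariance id μ + evariance id ν + ‖(∫ x, x ∂μ) - ∫ y, y ∂ν‖ₑ ^ 2 := by
  calc sqDist μ ν = ∫⁻ x, evariance id ν + ‖x - ∫ y, y ∂ν‖ₑ ^ 2 ∂μ := by
        refine lintegral_congr fun x => ?_
        simp_rw [enorm_sub_rev x, lintegral_enorm_sub_sq]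
    _ = _ := by
        rw [lintegral_add_left measurable_const, lintegral_const, measure_univ, mul_one,
          lintegral_enorm_sub_sq, add_comm (evariance id ν), add_assoc, add_assoc,
          add_comm (evariance id ν)]

lemma sqDist_self : sqDist μ μ = 2 * evariance id μ := by
  rw [sqDist_eq, sub_self, enorm_zero, zero_pow two_ne_zero, add_zero, two_mul]

end SqDist

lemma sqDist_bind_self (κ : Kernel ℝ ℝ) [IsSFiniteKernel κ] (ν : Measure ℝ) [SFinite ν] :
    sqDist (ν.bind κ) (ν.bind κ) = ∫⁻ u, ∫⁻ v, sqDist (κ u) (κ v) ∂ν ∂ν := by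
  have hmeas : Measurable fun p : ℝ × ℝ => ∫⁻ y, ‖p.1 - y‖ₑ ^ 2 ∂κ p.2 :=
    Measurable.lintegral_kernel_prod_right' (κ := κ.prodMkLeft ℝ)
      (f := fun q : (ℝ × ℝ) × ℝ => ‖q.1.1 - q.2‖ₑ ^ 2) (by fun_prop)
  have hinner (x : ℝ) : ∫⁻ y, ‖x - y‖ₑ ^ 2 ∂(ν.bind κ)
      = ∫⁻ v, ∫⁻ y, ‖x - y‖ₑ ^ 2 ∂κ v ∂ν :=
    Measure.lintegral_bind κ.aemeasurable (by fun_prop)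
  calc sqDist (ν.bind κ) (ν.bind κ)
      = ∫⁻ x, ∫⁻ v, ∫⁻ y, ‖x - y‖ₑ ^ 2 ∂κ v ∂ν ∂(ν.bind κ) := lintegral_congr hinner
    _ = ∫⁻ u, ∫⁻ x, ∫⁻ v, ∫⁻ y, ‖x - y‖ₑ ^ 2 ∂κ v ∂ν ∂κ u ∂ν :=
        Measure.lintegral_bind κ.aemeasurable hmeas.lintegral_prod_right'.aemeasurable
    _ = ∫⁻ u, ∫⁻ v, sqDist (κ u) (κ v) ∂ν ∂ν :=
        lintegral_congr fun u => lintegral_lintegral_swap hmeas.aemeasurable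

lemma evariance_bind_le (κ : Kernel ℝ ℝ) [IsMarkovKernel κ] (ν : Measure ℝ)
    [IsProbabilityMeasure ν] {K : ℝ≥0} (hK : LipschitzWith K fun u => ∫ x, x ∂κ u) :
    evariance id (ν.bind κ) ≤ (⨆ u, evariance id (κ u)) + K ^ 2 * evariance id ν := by
  set V := ⨆ u, evariance id (κ u)
  have hpair (u v : ℝ) : sqDist (κ u) (κ v) ≤ 2 * V + K ^ 2 * ‖u - v‖ₑ ^ 2 := by
    have hmean : ‖(∫ x, x ∂κ u) - ∫ x, x ∂κ v‖ₑ ≤ K * ‖u - v‖ₑ := by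
      simpa only [edist_eq_enorm_sub] using hK.edist_le_mul u v
    rw [sqDist_eq, two_mul, ← mul_pow]
    gcongr
    · exact le_iSup (fun u => evariance id (κ u)) u
    · exact le_iSup (fun u => evariance id (κ u)) v
  have hK2 : (K : ℝ≥0∞) ^ 2 ≠ ∞ := by finiteness
  refine (ENNReal.mul_le_mul_iff_right two_ne_zero ofNat_ne_top).1 ?_
  calc 2 * evariance id (ν.bind κ) = ∫⁻ u, ∫⁻ v, sqDist (κ u) (κ v) ∂ν ∂ν := by
        rw [← sqDist_self, sqDist_bind_self]
    _ ≤ ∫⁻ u, ∫⁻ v, 2 * V + K ^ 2 * ‖u - v‖ₑ ^ 2 ∂ν ∂ν := by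
        gcongr with u v
        exact hpair u v
    _ = 2 * V + K ^ 2 * sqDist ν ν := by
        simp only [lintegral_add_left measurable_const, lintegral_const, measure_univ, mul_one,
          lintegral_const_mul' _ _ hK2, sqDist]
    _ = 2 * (V + K ^ 2 * evariance id ν) := by
        rw [sqDist_self]
        ring

lemma geom_sum_le_min {r : ℝ≥0∞} (hr : r ≤ 1) (t : ℕ) :
    ∑ i ∈ Finset.range t, r ^ i ≤ min (t : ℝ≥0∞) (1 - r)⁻¹ := by
  refine le_min ?_ ((ENNReal.sum_le_tsum _).trans_eq (ENNReal.tsum_geometric r))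
  simpa using Finset.sum_le_card_nsmul (Finset.range t) (r ^ ·) 1 fun i _ => pow_le_one₀ zero_le hr

variable {κ : Kernel ℝ ℝ}

lemma chainLaw_one (z : ℝ) : chainLaw κ 1 z = κ z :=
  Measure.dirac_bind κ.measurable z

variable [IsMarkovKernel κ]

instance isProbabilityMeasure_chainLaw (t : ℕ) (z : ℝ) :
    IsProbabilityMeasure (chainLaw κ t z) := by
  induction t with
  | zero => exact Measure.dirac.isProbabilityMeasure
  | succ t ih => exact (inferInstance : IsProbabilityMeasure (κ ∘ₘ chainLaw κ t z))

lemma iSup_evariance_chainLaw_le {K : ℝ≥0} (hK : LipschitzWith K fun u => ∫ x, x ∂κ u)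
    (t : ℕ) :
    ⨆ z, evariance id (chainLaw κ t z) ≤
      (⨆ z, evariance id (κ z)) * ∑ i ∈ Finset.range t, ((K : ℝ≥0∞) ^ 2) ^ i := by
  induction t with
  | zero => simp [chainLaw, evariance]
  | succ t ih =>
    refine iSup_le fun z => ?_
    set V := ⨆ z, evariance id (κ z)
    calc evariance id (chainLaw κ (t + 1) z) ≤ V + K ^ 2 * evariance id (chainLaw κ t z) :=
          evariance_bind_le κ _ hK
      _ ≤ V + K ^ 2 * (V * ∑ i ∈ Finset.range t, ((K : ℝ≥0∞) ^ 2) ^ i) := by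
          gcongr
          exact (le_iSup (fun z => evariance id (chainLaw κ t z)) z).trans ih
      _ = V * ∑ i ∈ Finset.range (t + 1), ((K : ℝ≥0∞) ^ 2) ^ i := by
          rw [geom_sum_succ]
          ring

end

/-- Variance bound for contracting real-valued Markov chains: if the chain
`(Z_t)` with kernel `κ` satisfies `|E_z[Z_t] - E_z̃[Z_t]| ≤ ρ^t |z - z̃|` for
some `0 < ρ < 1` and all starting states, then
`v_t := sup_{z₀} Var_{z₀}(Z_t)` satisfies `v_t ≤ v₁ min{t, (1 - ρ²)⁻¹}`. -/
theorem variance_bound_of_contraction (κ : Kernel ℝ ℝ) [IsMarkovKernel κ]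
    (ρ : ℝ) (hρ0 : 0 < ρ) (hρ1 : ρ < 1)
    (hcontr : ∀ (z z' : ℝ) (t : ℕ),
      |(∫ x, x ∂(chainLaw κ t z)) - ∫ x, x ∂(chainLaw κ t z')| ≤
        ρ ^ t * |z - z'|)
    (t : ℕ) :
    (⨆ z₀ : ℝ, evariance id (chainLaw κ t z₀)) ≤
      (⨆ z₀ : ℝ, evariance id (chainLaw κ 1 z₀)) *
        min (t : ℝ≥0∞) (ENNReal.ofReal (1 - ρ ^ 2)⁻¹) := by
  have hK : LipschitzWith ρ.toNNReal fun u => ∫ x, x ∂κ u := by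
    refine LipschitzWith.of_dist_le_mul fun u v => ?_
    simpa [chainLaw_one, Real.dist_eq, Real.coe_toNNReal _ hρ0.le] using hcontr u v 1
  have hsq : (ρ.toNNReal : ℝ≥0∞) ^ 2 = ENNReal.ofReal (ρ ^ 2) :=
    (ENNReal.ofReal_pow hρ0.le 2).symm
  have hgap : (1 - ENNReal.ofReal (ρ ^ 2))⁻¹ = ENNReal.ofReal (1 - ρ ^ 2)⁻¹ := by
    rw [← ENNReal.ofReal_one, ← ENNReal.ofReal_sub _ (sq_nonneg ρ),
      ENNReal.ofReal_inv_of_pos (by nlinarith)]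
  simp only [chainLaw_one]
  refine (iSup_evariance_chainLaw_le hK t).trans ?_
  gcongr
  rw [hsq, ← hgap]
  exact geom_sum_le_min (ENNReal.ofReal_le_one.2 (by nlinarith)) t

end CW
end

section
/- Decay of expected spins at high temperature: let β < 1. (i) For all σ ∈ Ω, all t ≥ 0, and every vertex i, |E_σ[S(X_t)]| ≤ 2e^{-(1−β)t/n} and |E_σ[X_t(i)]| ≤ 2e^{-(1−β)t/n}. (ii) For any subset A of vertices, setting M_t(A) := (1/2)Σ_{i∈A} X_t(i), one has |E_σ[M_t(A)]| ≤ |A|·e^{-(1−β)t/n}, and Var(M_t(A)) ≤ c·n for some constant c > 0 depending only on β. (iii) There is a constant C > 0 depending only on β such that for any subset A of vertices and all σ ∈ Ω, E_σ[|M_t(A)|] ≤ n·e^{-(1−β)t/n} + C√n. -/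
open Filter Real

namespace CW

/-- Configurations of the Curie-Weiss model on `n` vertices:
`true` encodes spin `+1` and `false` encodes spin `-1`. -/
abbrev Config (n : ℕ) := Fin n → Bool

noncomputable section

/-- The spin (±1) at site `i`. -/
def spin {n : ℕ} (σ : Config n) (i : Fin n) : ℝ := if σ i then 1 else -1

/-- Normalized magnetization `S(σ) = n⁻¹ ∑ᵢ σ(i)`. -/
def mag {n : ℕ} (σ : Config n) : ℝ := (∑ i, spin σ i) / n

/-- One-step transition kernel of the Glauber dynamics for the Curie-Weiss
model: a uniformly chosen site `i` is refreshed, becoming `+1` with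
probability `p₊(S(σ) - σ(i)/n)`. -/
def glauberKernel (β : ℝ) (n : ℕ) (σ η : Config n) : ℝ :=
  (1 / n) * ∑ i : Fin n,
    if ∀ j, j ≠ i → η j = σ j then
      (if η i then pPlus β (mag σ - spin σ i / n)
       else 1 - pPlus β (mag σ - spin σ i / n))
    else 0

/-- Law of the Glauber dynamics at time `t` started from `σ`. -/
def glauberLaw (β : ℝ) (n : ℕ) : ℕ → Config n → Config n → ℝ
  | 0, σ, η => if η = σ then 1 else 0
  | t + 1, σ, η => ∑ τ : Config n, glauberLaw β n t σ τ * glauberKernel β n τ η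

/-- The (normalized) exponent in the Curie-Weiss measure. -/
def cwExponent {n : ℕ} (β : ℝ) (σ : Config n) : ℝ :=
  (β / n) * ∑ i : Fin n, ∑ j : Fin n, if i < j then spin σ i * spin σ j else 0

/-- The Curie-Weiss (mean-field Ising) probability measure
`μ(σ) = Z(β)⁻¹ exp((β/n) ∑_{i<j} σ(i)σ(j))`. -/
def cwMeasure (β : ℝ) (n : ℕ) (σ : Config n) : ℝ :=
  Real.exp (cwExponent β σ) / ∑ η : Config n, Real.exp (cwExponent β η)

/-- Total variation distance between two (discrete) distributions. -/
def tvDist {Ω : Type*} [Fintype Ω] (μ ν : Ω → ℝ) : ℝ :=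
  (∑ x, |μ x - ν x|) / 2

/-- Worst-case total variation distance to stationarity at time `t`. -/
def glauberDist (β : ℝ) (n t : ℕ) : ℝ :=
  ⨆ σ : Config n, tvDist (glauberLaw β n t σ) (cwMeasure β n)

/-
The Glauber dynamics is a single-site heat-bath chain whose rate `p₊(S(σ) - σ(i)/n)` at a site
moves by at most `β/n` when another spin is flipped, and satisfies `p₊(-s) = 1 - p₊(s)`. By
path coupling, the one-step operator `P` sends an observable that moves by at most `ℓ j` when
spin `j` is flipped to one that moves by at most `(1 - 1/n) ℓ j + (β/n²) ∑ᵢ ℓ i`; the total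
`∑ ℓ` thus shrinks by the factor `1 - (1 - β)/n` per step. A linear spin statistic `f` is odd
under global spin reversal, which commutes with `P`, so `2 |Pᵗf(σ)| = |Pᵗf(σ) - Pᵗf(-σ)|` is at
most the total `t`-step profile: this is the exponential decay of the means. For the second
moment, `P(f²) - (Pf)² ≤ n⁻¹ ∑ᵢ (ℓ i)²`, and telescoping over the steps bounds the variance by
the geometric series `∑ₛ (1 - (1 - β)/n)ˢ ≤ n/(1 - β)`. Finally
`E|f| ≤ √(E f²) ≤ √(Var f) + |E f|`.
-/

open Finset
open Function (update)

lemma hasDerivAt_tanh (x : ℝ) : HasDerivAt Real.tanh (Real.cosh x ^ 2)⁻¹ x := by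
  have h := (Real.hasDerivAt_sinh x).div (Real.hasDerivAt_cosh x) (Real.cosh_pos x).ne'
  rw [← sq, ← sq, Real.cosh_sq_sub_sinh_sq, one_div] at h
  rwa [show Real.tanh = Real.sinh / Real.cosh from funext Real.tanh_eq_sinh_div_cosh]

lemma lipschitzWith_tanh : LipschitzWith 1 Real.tanh := by
  refine lipschitzWith_of_nnnorm_deriv_le (fun x => (hasDerivAt_tanh x).differentiableAt)
    fun x => ?_
  rw [(hasDerivAt_tanh x).deriv, ← NNReal.coe_le_coe, coe_nnnorm, Real.norm_eq_abs,
    abs_of_pos (by positivity), NNReal.coe_one]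
  exact inv_le_one_of_one_le₀ (one_le_pow₀ (Real.one_le_cosh x))

lemma sum_ite_forall_ne_eq {n : ℕ} {α : Type*} [Fintype α] [DecidableEq α] (f : Fin n → α)
    (i : Fin n) (h : (Fin n → α) → ℝ) :
    ∑ g, (if ∀ j, j ≠ i → g j = f j then h g else 0) = ∑ a, h (update f i a) := by
  rw [← sum_filter]
  have : univ.filter (fun g : Fin n → α => ∀ j, j ≠ i → g j = f j) = univ.image (update f i) := by
    ext g
    simp only [mem_filter, mem_univ, true_and, mem_image]
    exact ⟨fun hg => ⟨g i, (Function.eq_update_iff.2 ⟨rfl, hg⟩).symm⟩,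
      fun ⟨a, ha⟩ j hj => ha ▸ Function.update_of_ne hj a f⟩
  rw [this, sum_image fun a _ b _ hab => Function.update_injective f i hab]

lemma abs_mix_sub_mix_le {p q a b a' b' L M κ : ℝ} (hp : p ∈ Set.Icc 0 1)
    (ha : |a - a'| ≤ L) (hb : |b - b'| ≤ L) (hab : |a' - b'| ≤ M) (hpq : |p - q| ≤ κ) :
    |p * a + (1 - p) * b - (q * a' + (1 - q) * b')| ≤ L + κ * M := by
  have hp1 : 0 ≤ 1 - p := sub_nonneg.2 hp.2
  calc |p * a + (1 - p) * b - (q * a' + (1 - q) * b')|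
      = |p * (a - a') + (1 - p) * (b - b') + (p - q) * (a' - b')| := by ring_nf
    _ ≤ |p * (a - a')| + |(1 - p) * (b - b')| + |(p - q) * (a' - b')| := abs_add_three _ _ _
    _ ≤ p * L + (1 - p) * L + κ * M := by
        rw [abs_mul, abs_mul, abs_mul, abs_of_nonneg hp.1, abs_of_nonneg hp1]
        exact add_le_add (add_le_add (mul_le_mul_of_nonneg_left ha hp.1)
          (mul_le_mul_of_nonneg_left hb hp1)) (mul_le_mul hpq hab (abs_nonneg _)
          ((abs_nonneg _).trans hpq))
    _ = L + κ * M := by ring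

lemma sum_mul_abs_le_sqrt_variance_add_abs {ι : Type*} (s : Finset ι) {w f : ι → ℝ}
    (hw : ∀ i, 0 ≤ w i) (hw1 : ∑ i ∈ s, w i = 1) :
    ∑ i ∈ s, w i * |f i|
      ≤ √(∑ i ∈ s, w i * f i ^ 2 - (∑ i ∈ s, w i * f i) ^ 2) + |∑ i ∈ s, w i * f i| := by
  set m := ∑ i ∈ s, w i * f i
  set V := ∑ i ∈ s, w i * f i ^ 2 - m ^ 2
  have hcs : ∑ i ∈ s, w i * |f i| ≤ √(∑ i ∈ s, w i * f i ^ 2) := by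
    have h := Real.sum_sqrt_mul_sqrt_le s hw (fun i => mul_nonneg (hw i) (sq_nonneg (f i)))
    rwa [hw1, Real.sqrt_one, one_mul,
      sum_congr rfl fun i _ => by rw [← Real.sqrt_mul (hw i), ← mul_assoc, ← sq,
        Real.sqrt_mul (sq_nonneg _), Real.sqrt_sq (hw i), Real.sqrt_sq_eq_abs]] at h
  have hsq : V + m ^ 2 ≤ (√V + |m|) ^ 2 := by
    nlinarith [Real.sq_sqrt' (x := V), le_max_left V 0, sq_abs m, Real.sqrt_nonneg V,
      abs_nonneg m]
  calc ∑ i ∈ s, w i * |f i| ≤ √(V + m ^ 2) := by simpa [V] using hcs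
    _ ≤ √((√V + |m|) ^ 2) := Real.sqrt_le_sqrt hsq
    _ = √V + |m| := Real.sqrt_sq (by positivity)

section Configurations

variable {n : ℕ}

def flipSet (s : Finset (Fin n)) (σ : Config n) : Config n :=
  fun i => if i ∈ s then !σ i else σ i

lemma spin_flipSet (s : Finset (Fin n)) (σ : Config n) (i : Fin n) :
    spin (flipSet s σ) i = if i ∈ s then -spin σ i else spin σ i := by
  unfold spin flipSet
  split_ifs <;> simp_all

lemma flipSet_insert {s : Finset (Fin n)} {j : Fin n} (hj : j ∉ s) (σ : Config n) :
    flipSet (insert j s) σ = flipSet {j} (flipSet s σ) := by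
  funext i
  by_cases hij : i = j
  · subst hij; simp [flipSet, hj]
  · simp [flipSet, hij]

lemma update_flipSet_singleton {i j : Fin n} (hij : i ≠ j) (σ : Config n) (b : Bool) :
    update (flipSet {j} σ) i b = flipSet {j} (update σ i b) := by
  funext k
  by_cases hk : k = i
  · subst hk; simp [flipSet, hij]
  · simp [flipSet, hk]

lemma update_flipSet_singleton_self (σ : Config n) (i : Fin n) (b : Bool) :
    update (flipSet {i} σ) i b = update σ i b := by
  funext k
  by_cases hk : k = i
  · subst hk; simp
  · simp [flipSet, hk]

lemma flipSet_singleton_update (σ : Config n) (i : Fin n) (b : Bool) :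
    flipSet {i} (update σ i b) = update σ i (!b) := by
  rw [← update_flipSet_singleton_self]
  funext k
  by_cases hk : k = i
  · subst hk; simp [flipSet]
  · simp [flipSet, hk]

lemma update_flipSet_univ (σ : Config n) (i : Fin n) (b : Bool) :
    update (flipSet univ σ) i b = flipSet univ (update σ i (!b)) := by
  funext k
  by_cases hk : k = i
  · subst hk; simp [flipSet]
  · simp [flipSet, hk]

lemma update_eq_self_or_flipSet (σ : Config n) (i : Fin n) (b : Bool) :
    update σ i b = σ ∨ update σ i b = flipSet {i} σ := by
  by_cases h : σ i = b
  · exact Or.inl (h ▸ Function.update_eq_self i σ)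
  · refine Or.inr ?_
    rw [← update_flipSet_singleton_self, Function.update_eq_self_iff]
    simp only [flipSet, mem_singleton, if_true]
    revert h; cases b <;> cases σ i <;> simp

def weightedSpin (a : Fin n → ℝ) (σ : Config n) : ℝ := ∑ i, a i * spin σ i

lemma weightedSpin_sub_flipSet (a : Fin n → ℝ) (σ : Config n) (j : Fin n) :
    weightedSpin a σ - weightedSpin a (flipSet {j} σ) = 2 * a j * spin σ j := by
  simp only [weightedSpin, ← sum_sub_distrib, spin_flipSet, mem_singleton]
  rw [sum_eq_single j (fun i _ hij => by simp [hij]) (by simp)]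
  simp only [if_true]; ring

lemma weightedSpin_flipSet_univ (a : Fin n → ℝ) (σ : Config n) :
    weightedSpin a (flipSet univ σ) = -weightedSpin a σ := by
  simp [weightedSpin, spin_flipSet, sum_neg_distrib]

lemma abs_spin (σ : Config n) (i : Fin n) : |spin σ i| = 1 := by
  unfold spin; split_ifs <;> simp

lemma mag_eq_weightedSpin : (mag : Config n → ℝ) = weightedSpin fun _ => (n : ℝ)⁻¹ := by
  funext σ; simp [mag, weightedSpin, ← mul_sum, div_eq_inv_mul]

lemma spin_eq_weightedSpin (σ : Config n) (i : Fin n) :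
    spin σ i = weightedSpin (Pi.single i 1) σ := by
  simp [weightedSpin, Pi.single_apply]

def halfIndicator (A : Finset (Fin n)) (i : Fin n) : ℝ := if i ∈ A then 1 / 2 else 0

lemma abs_halfIndicator_le (A : Finset (Fin n)) (i : Fin n) : |halfIndicator A i| ≤ 1 / 2 := by
  unfold halfIndicator; split_ifs <;> norm_num

lemma sum_abs_halfIndicator (A : Finset (Fin n)) : ∑ i, |halfIndicator A i| = A.card / 2 := by
  simp [halfIndicator, apply_ite, sum_ite_mem, div_eq_inv_mul, mul_comm]

lemma sum_spin_div_two_eq_weightedSpin (A : Finset (Fin n)) (σ : Config n) :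
    (∑ i ∈ A, spin σ i) / 2 = weightedSpin (halfIndicator A) σ := by
  simp [weightedSpin, halfIndicator, ite_mul, sum_ite_mem, div_eq_inv_mul, mul_sum]

end Configurations

section HeatBath

variable {n : ℕ} {p : Config n → Fin n → ℝ}

def resample (p : Config n → Fin n → ℝ) (g : Config n → ℝ) (τ : Config n) (i : Fin n) : ℝ :=
  p τ i * g (update τ i true) + (1 - p τ i) * g (update τ i false)

def heatBath (p : Config n → Fin n → ℝ) (g : Config n → ℝ) (τ : Config n) : ℝ :=
  (n : ℝ)⁻¹ * ∑ i, resample p g τ i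

lemma heatBath_mono (hp : ∀ τ i, p τ i ∈ Set.Icc 0 1) : Monotone (heatBath p) := by
  intro u v huv τ
  refine mul_le_mul_of_nonneg_left (sum_le_sum fun i _ => ?_) (by positivity)
  have hp1 : 0 ≤ 1 - p τ i := sub_nonneg.2 (hp τ i).2
  unfold resample
  gcongr
  · exact (hp τ i).1
  · exact huv _
  · exact huv _

lemma heatBath_add_const (hn : n ≠ 0) (g : Config n → ℝ) (c : ℝ) :
    heatBath p (fun x => g x + c) = fun τ => heatBath p g τ + c := by
  funext τ
  have hsite : ∀ i, resample p (fun x => g x + c) τ i = resample p g τ i + c := fun i => by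
    unfold resample; ring
  simp only [heatBath, hsite, sum_add_distrib, sum_const, card_univ, Fintype.card_fin,
    nsmul_eq_mul]
  field_simp

lemma heatBath_const (hn : n ≠ 0) (c : ℝ) : heatBath p (fun _ => c) = fun _ => c := by
  simpa [heatBath, resample] using heatBath_add_const (p := p) hn 0 c

lemma heatBath_sq_sub_sq_le_sq_sub_const (hn : n ≠ 0) (g : Config n → ℝ) (c : ℝ)
    (τ : Config n) :
    heatBath p (fun x => g x ^ 2) τ - heatBath p g τ ^ 2
      ≤ heatBath p (fun x => (g x - c) ^ 2) τ := by
  have hsite : ∀ i, resample p (fun x => (g x - c) ^ 2) τ i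
      = resample p (fun x => g x ^ 2) τ i - 2 * c * resample p g τ i + c ^ 2 := fun i => by
    unfold resample; ring
  have hexp : heatBath p (fun x => (g x - c) ^ 2) τ
      = heatBath p (fun x => g x ^ 2) τ - 2 * c * heatBath p g τ + c ^ 2 := by
    simp only [heatBath, hsite, sum_add_distrib, sum_sub_distrib, ← mul_sum, sum_const,
      card_univ, Fintype.card_fin, nsmul_eq_mul]
    field_simp
  nlinarith [sq_nonneg (heatBath p g τ - c)]

end HeatBath

section FlipLipschitz

variable {n : ℕ} {g : Config n → ℝ} {ℓ : Fin n → ℝ}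

def FlipLipschitz (g : Config n → ℝ) (ℓ : Fin n → ℝ) : Prop :=
  ∀ σ j, |g σ - g (flipSet {j} σ)| ≤ ℓ j

lemma FlipLipschitz.nonneg (hg : FlipLipschitz g ℓ) (j : Fin n) : 0 ≤ ℓ j :=
  (abs_nonneg _).trans (hg (fun _ => true) j)

lemma FlipLipschitz.abs_sub_flipSet_le (hg : FlipLipschitz g ℓ) (s : Finset (Fin n))
    (σ : Config n) : |g σ - g (flipSet s σ)| ≤ ∑ j ∈ s, ℓ j := by
  induction s using Finset.induction_on with
  | empty => simp [show flipSet ∅ σ = σ from funext fun _ => by simp [flipSet]]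
  | @insert j s hj ih =>
    rw [flipSet_insert hj, sum_insert hj, add_comm]
    exact (abs_sub_le _ _ _).trans (add_le_add ih (hg _ j))

lemma flipLipschitz_weightedSpin (a : Fin n → ℝ) :
    FlipLipschitz (weightedSpin a) (fun j => 2 * |a j|) := by
  intro σ j
  simp [weightedSpin_sub_flipSet, abs_mul, abs_spin]

/-- With probability `1/n` site `j` itself is resampled and the two copies agree afterwards;
otherwise the disagreement at `j` persists, and resampling a site `i` adds `κ ℓ i` through the
change of its rate. -/
def profileStep (κ : ℝ) (ℓ : Fin n → ℝ) : Fin n → ℝ :=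
  fun j => (1 - (n : ℝ)⁻¹) * ℓ j + κ * (n : ℝ)⁻¹ * ∑ i, ℓ i

variable {κ : ℝ}

lemma sum_profileStep (κ : ℝ) (ℓ : Fin n → ℝ) :
    ∑ j, profileStep κ ℓ j = (1 - (n : ℝ)⁻¹ + κ) * ∑ j, ℓ j := by
  rcases Nat.eq_zero_or_pos n with rfl | hn
  · simp
  simp only [profileStep, sum_add_distrib, ← mul_sum, sum_const, card_univ, Fintype.card_fin,
    nsmul_eq_mul]
  field_simp

lemma profileStep_nonneg (hκ : 0 ≤ κ) (hℓ : ∀ i, 0 ≤ ℓ i) (j : Fin n) :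
    0 ≤ profileStep κ ℓ j := by
  have h1 : 0 ≤ 1 - (n : ℝ)⁻¹ := sub_nonneg.2 (Nat.cast_inv_le_one n)
  have h2 : 0 ≤ ∑ i, ℓ i := sum_nonneg fun i _ => hℓ i
  exact add_nonneg (mul_nonneg h1 (hℓ j)) (mul_nonneg (by positivity) h2)

lemma profileStep_le (hκ : 0 ≤ κ) {c : ℝ} (hℓ : ∀ i, ℓ i ≤ c) (j : Fin n) :
    profileStep κ ℓ j ≤ (1 - (n : ℝ)⁻¹ + κ) * c := by
  have hn : (n : ℝ) ≠ 0 := Nat.cast_ne_zero.2 (Fin.pos j).ne'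
  have hsum : ∑ i, ℓ i ≤ n * c := by
    simpa using sum_le_sum fun i (_ : i ∈ univ) => hℓ i
  calc profileStep κ ℓ j ≤ (1 - (n : ℝ)⁻¹) * c + κ * (n : ℝ)⁻¹ * (n * c) := by
        unfold profileStep
        gcongr
        · exact sub_nonneg.2 (Nat.cast_inv_le_one n)
        · exact hℓ j
    _ = (1 - (n : ℝ)⁻¹ + κ) * c := by field_simp

lemma sum_profileStep_iterate (κ : ℝ) (ℓ : Fin n → ℝ) (t : ℕ) :
    ∑ j, (profileStep κ)^[t] ℓ j = (1 - (n : ℝ)⁻¹ + κ) ^ t * ∑ j, ℓ j := by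
  induction t with
  | zero => simp
  | succ t ih => rw [Function.iterate_succ_apply', sum_profileStep, ih, pow_succ]; ring

lemma profileStep_iterate_nonneg (hκ : 0 ≤ κ) (hℓ : ∀ i, 0 ≤ ℓ i) (t : ℕ) (j : Fin n) :
    0 ≤ (profileStep κ)^[t] ℓ j :=
  Function.Iterate.rec (fun ℓ : Fin n → ℝ => ∀ j, 0 ≤ ℓ j) hℓ
    (fun _ h => profileStep_nonneg hκ h) t j

lemma profileStep_iterate_le (hκ : 0 ≤ κ) {c : ℝ} (hℓ : ∀ i, ℓ i ≤ c) (t : ℕ) (j : Fin n) :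
    (profileStep κ)^[t] ℓ j ≤ (1 - (n : ℝ)⁻¹ + κ) ^ t * c := by
  induction t generalizing ℓ c with
  | zero => simpa using hℓ j
  | succ t ih =>
    rw [Function.iterate_succ_apply, pow_succ, mul_assoc]
    exact ih (profileStep_le hκ hℓ)

end FlipLipschitz

section Contraction

variable {n : ℕ} {p : Config n → Fin n → ℝ} {κ : ℝ} {g : Config n → ℝ} {ℓ : Fin n → ℝ}

lemma sum_ite_eq_zero_else_const (j : Fin n) (c : ℝ) :
    ∑ i, (if i = j then 0 else c) = (n - 1) * c := by
  simp [sum_ite, filter_ne', card_erase_of_mem, sub_mul, Nat.cast_pred (Fin.pos j)]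

lemma flipLipschitz_heatBath (hp : ∀ τ i, p τ i ∈ Set.Icc 0 1)
    (hself : ∀ σ j, p (flipSet {j} σ) j = p σ j)
    (hlip : ∀ σ i j, i ≠ j → |p σ i - p (flipSet {j} σ) i| ≤ κ) (hκ : 0 ≤ κ)
    (hg : FlipLipschitz g ℓ) : FlipLipschitz (heatBath p g) (profileStep κ ℓ) := by
  intro σ j
  have hsite : ∀ i, |resample p g σ i - resample p g (flipSet {j} σ) i|
      ≤ (if i = j then 0 else ℓ j) + κ * ℓ i := by
    intro i
    by_cases hij : i = j
    · subst hij
      simpa [resample, hself, update_flipSet_singleton_self] using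
        mul_nonneg hκ (hg.nonneg i)
    rw [if_neg hij]
    refine abs_mix_sub_mix_le (hp σ i) ?_ ?_ ?_ (hlip σ i j hij)
    · rw [update_flipSet_singleton hij]; exact hg _ j
    · rw [update_flipSet_singleton hij]; exact hg _ j
    · rw [abs_sub_comm]
      simpa only [flipSet_singleton_update, Bool.not_false] using hg (update _ i false) i
  have hn : (n : ℝ) ≠ 0 := Nat.cast_ne_zero.2 (Fin.pos j).ne'
  calc |heatBath p g σ - heatBath p g (flipSet {j} σ)|
      = (n : ℝ)⁻¹ * |∑ i, (resample p g σ i - resample p g (flipSet {j} σ) i)| := by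
        rw [heatBath, heatBath, ← mul_sub, ← sum_sub_distrib, abs_mul,
          abs_of_nonneg (by positivity)]
    _ ≤ (n : ℝ)⁻¹ * ∑ i, ((if i = j then 0 else ℓ j) + κ * ℓ i) := by
        gcongr
        exact (abs_sum_le_sum_abs _ _).trans (sum_le_sum fun i _ => hsite i)
    _ = profileStep κ ℓ j := by
        rw [sum_add_distrib, sum_ite_eq_zero_else_const, ← mul_sum, profileStep]
        field_simp

lemma flipLipschitz_heatBath_iterate (hp : ∀ τ i, p τ i ∈ Set.Icc 0 1)
    (hself : ∀ σ j, p (flipSet {j} σ) j = p σ j)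
    (hlip : ∀ σ i j, i ≠ j → |p σ i - p (flipSet {j} σ) i| ≤ κ) (hκ : 0 ≤ κ)
    (hg : FlipLipschitz g ℓ) (t : ℕ) :
    FlipLipschitz ((heatBath p)^[t] g) ((profileStep κ)^[t] ℓ) := by
  induction t generalizing g ℓ with
  | zero => exact hg
  | succ t ih => exact ih (flipLipschitz_heatBath hp hself hlip hκ hg)

lemma heatBath_flipSet_univ (hsymm : ∀ σ i, p (flipSet univ σ) i = 1 - p σ i)
    (hg : ∀ σ, g (flipSet univ σ) = -g σ) (σ : Config n) :
    heatBath p g (flipSet univ σ) = -heatBath p g σ := by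
  simp only [heatBath, resample, hsymm, update_flipSet_univ, hg, Bool.not_true,
    Bool.not_false, ← mul_neg, ← sum_neg_distrib]
  congr 1
  exact sum_congr rfl fun i _ => by ring

lemma heatBath_iterate_flipSet_univ (hsymm : ∀ σ i, p (flipSet univ σ) i = 1 - p σ i)
    (hg : ∀ σ, g (flipSet univ σ) = -g σ) (t : ℕ) (σ : Config n) :
    (heatBath p)^[t] g (flipSet univ σ) = -(heatBath p)^[t] g σ :=
  Function.Iterate.rec (fun g : Config n → ℝ => ∀ σ, g (flipSet univ σ) = -g σ) hg
    (fun _ h => heatBath_flipSet_univ hsymm h) t σ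

lemma abs_heatBath_iterate_le (hp : ∀ τ i, p τ i ∈ Set.Icc 0 1)
    (hself : ∀ σ j, p (flipSet {j} σ) j = p σ j)
    (hlip : ∀ σ i j, i ≠ j → |p σ i - p (flipSet {j} σ) i| ≤ κ) (hκ : 0 ≤ κ)
    (hsymm : ∀ σ i, p (flipSet univ σ) i = 1 - p σ i)
    (hg : FlipLipschitz g ℓ) (hodd : ∀ σ, g (flipSet univ σ) = -g σ) (t : ℕ) (σ : Config n) :
    |(heatBath p)^[t] g σ| ≤ (1 - (n : ℝ)⁻¹ + κ) ^ t * (∑ j, ℓ j) / 2 := by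
  have h := (flipLipschitz_heatBath_iterate hp hself hlip hκ hg t).abs_sub_flipSet_le univ σ
  rw [heatBath_iterate_flipSet_univ hsymm hodd, sub_neg_eq_add, ← two_mul, abs_mul,
    abs_two, sum_profileStep_iterate] at h
  linarith

end Contraction

section Variance

variable {n : ℕ} {p : Config n → Fin n → ℝ} {κ : ℝ} {g : Config n → ℝ} {ℓ : Fin n → ℝ}

lemma heatBath_sq_sub_sq_le (hn : n ≠ 0) (hp : ∀ τ i, p τ i ∈ Set.Icc 0 1)
    (hg : FlipLipschitz g ℓ) (τ : Config n) :
    heatBath p (fun x => g x ^ 2) τ - heatBath p g τ ^ 2 ≤ (n : ℝ)⁻¹ * ∑ i, ℓ i ^ 2 := by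
  refine (heatBath_sq_sub_sq_le_sq_sub_const hn g (g τ) τ).trans ?_
  refine mul_le_mul_of_nonneg_left (sum_le_sum fun i _ => ?_) (by positivity)
  have hb : ∀ b, (g (update τ i b) - g τ) ^ 2 ≤ ℓ i ^ 2 := fun b => by
    refine sq_le_sq.2 ?_
    rw [abs_of_nonneg (hg.nonneg i)]
    rcases update_eq_self_or_flipSet τ i b with h | h
    · simpa [h] using hg.nonneg i
    · rw [h, abs_sub_comm]; exact hg τ i
  have hp1 : 0 ≤ 1 - p τ i := sub_nonneg.2 (hp τ i).2
  unfold resample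
  nlinarith [mul_le_mul_of_nonneg_left (hb true) (hp τ i).1,
    mul_le_mul_of_nonneg_left (hb false) hp1]

lemma heatBath_iterate_sq_sub_sq_le (hn : n ≠ 0) (hp : ∀ τ i, p τ i ∈ Set.Icc 0 1)
    (hself : ∀ σ j, p (flipSet {j} σ) j = p σ j)
    (hlip : ∀ σ i j, i ≠ j → |p σ i - p (flipSet {j} σ) i| ≤ κ) (hκ : 0 ≤ κ)
    (hg : FlipLipschitz g ℓ) (t : ℕ) (σ : Config n) :
    (heatBath p)^[t] (fun x => g x ^ 2) σ - (heatBath p)^[t] g σ ^ 2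
      ≤ ∑ s ∈ range t, (n : ℝ)⁻¹ * ∑ i, (profileStep κ)^[s] ℓ i ^ 2 := by
  induction t generalizing g ℓ with
  | zero => simp
  | succ t ih =>
    set c := (n : ℝ)⁻¹ * ∑ i, ℓ i ^ 2
    have hstep : heatBath p (fun x => g x ^ 2) ≤ fun x => heatBath p g x ^ 2 + c :=
      fun τ => by linarith [heatBath_sq_sub_sq_le hn hp hg τ]
    have hshift : (heatBath p)^[t] (fun x => heatBath p g x ^ 2 + c) σ
        = (heatBath p)^[t] (fun x => heatBath p g x ^ 2) σ + c :=
      congrFun (Function.Commute.iterate_left (g := fun u x => u x + c)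
        (fun u => heatBath_add_const hn u c) t _) σ
    have hih := ih (flipLipschitz_heatBath hp hself hlip hκ hg)
    have hmono := (heatBath_mono hp).iterate t hstep σ
    rw [Function.iterate_succ_apply, Function.iterate_succ_apply, sum_range_succ']
    simp only [Function.iterate_succ_apply, Function.iterate_zero_apply]
    linarith

lemma inv_mul_sum_sq_profileStep_iterate_le (hn : n ≠ 0) (hκ : 0 ≤ κ) (hκn : κ ≤ (n : ℝ)⁻¹)
    (hℓ0 : ∀ i, 0 ≤ ℓ i) (hℓ1 : ∀ i, ℓ i ≤ 1) (s : ℕ) :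
    (n : ℝ)⁻¹ * ∑ i, (profileStep κ)^[s] ℓ i ^ 2 ≤ (1 - (n : ℝ)⁻¹ + κ) ^ s := by
  set r := 1 - (n : ℝ)⁻¹ + κ
  have hr0 : 0 ≤ r := by linarith [Nat.cast_inv_le_one (α := ℝ) n]
  have hrs : r ^ s ≤ 1 := pow_le_one₀ hr0 (by linarith)
  have hsum : ∑ i, ℓ i ≤ n := by simpa using sum_le_sum fun i (_ : i ∈ univ) => hℓ1 i
  have hn' : (0 : ℝ) < n := by positivity
  calc (n : ℝ)⁻¹ * ∑ i, (profileStep κ)^[s] ℓ i ^ 2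
      ≤ (n : ℝ)⁻¹ * ∑ i, r ^ s * (profileStep κ)^[s] ℓ i := by
        gcongr with i
        rw [sq]
        exact mul_le_mul_of_nonneg_right (by simpa using profileStep_iterate_le hκ hℓ1 s i)
          (profileStep_iterate_nonneg hκ hℓ0 s i)
    _ ≤ (n : ℝ)⁻¹ * (r ^ s * (r ^ s * n)) := by
        rw [← mul_sum, sum_profileStep_iterate]
        gcongr
    _ ≤ r ^ s := by
        rw [mul_comm, mul_assoc, mul_assoc, mul_inv_cancel₀ hn'.ne', mul_one]
        exact mul_le_of_le_one_right (pow_nonneg hr0 s) hrs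

lemma heatBath_iterate_variance_le (hn : n ≠ 0) (hp : ∀ τ i, p τ i ∈ Set.Icc 0 1)
    (hself : ∀ σ j, p (flipSet {j} σ) j = p σ j)
    (hlip : ∀ σ i j, i ≠ j → |p σ i - p (flipSet {j} σ) i| ≤ κ) (hκ : 0 ≤ κ)
    (hκn : κ < (n : ℝ)⁻¹) (hg : FlipLipschitz g ℓ) (hℓ1 : ∀ i, ℓ i ≤ 1) (t : ℕ)
    (σ : Config n) :
    (heatBath p)^[t] (fun x => g x ^ 2) σ - (heatBath p)^[t] g σ ^ 2 ≤ ((n : ℝ)⁻¹ - κ)⁻¹ := by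
  have hr0 : 0 ≤ 1 - (n : ℝ)⁻¹ + κ := by linarith [Nat.cast_inv_le_one (α := ℝ) n]
  calc _ ≤ ∑ s ∈ range t, (n : ℝ)⁻¹ * ∑ i, (profileStep κ)^[s] ℓ i ^ 2 :=
        heatBath_iterate_sq_sub_sq_le hn hp hself hlip hκ hg t σ
    _ ≤ ∑ s ∈ Ico 0 t, (1 - (n : ℝ)⁻¹ + κ) ^ s := by
        rw [← range_eq_Ico]
        exact sum_le_sum fun s _ =>
          inv_mul_sum_sq_profileStep_iterate_le hn hκ hκn.le hg.nonneg hℓ1 s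
    _ ≤ (1 - (n : ℝ)⁻¹ + κ) ^ 0 / (1 - (1 - (n : ℝ)⁻¹ + κ)) :=
        geom_sum_Ico_le_of_lt_one hr0 (by linarith)
    _ = ((n : ℝ)⁻¹ - κ)⁻¹ := by rw [pow_zero, one_div]; ring_nf

end Variance

lemma pPlus_mem_Icc (β s : ℝ) : pPlus β s ∈ Set.Icc 0 1 := by
  unfold pPlus
  constructor <;> linarith [Real.neg_one_lt_tanh (β * s), Real.tanh_lt_one (β * s)]

lemma abs_pPlus_sub_le (β s s' : ℝ) : |pPlus β s - pPlus β s'| ≤ |β| / 2 * |s - s'| := by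
  have h := lipschitzWith_tanh.dist_le_mul (β * s) (β * s')
  rw [Real.dist_eq, Real.dist_eq, NNReal.coe_one, one_mul, ← mul_sub, abs_mul] at h
  rw [pPlus, pPlus, show (1 + tanh (β * s)) / 2 - (1 + tanh (β * s')) / 2
    = (tanh (β * s) - tanh (β * s')) / 2 by ring, abs_div, abs_two]
  linarith

section CurieWeiss

variable {n : ℕ} {β : ℝ}

def cwRate (β : ℝ) (τ : Config n) (i : Fin n) : ℝ := pPlus β (mag τ - spin τ i / n)

lemma cwRate_mem_Icc (β : ℝ) (τ : Config n) (i : Fin n) : cwRate β τ i ∈ Set.Icc 0 1 :=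
  pPlus_mem_Icc _ _

lemma mag_flipSet_singleton (σ : Config n) (j : Fin n) :
    mag (flipSet {j} σ) = mag σ - 2 * spin σ j / n := by
  have h := weightedSpin_sub_flipSet (fun _ => (n : ℝ)⁻¹) σ j
  rw [← mag_eq_weightedSpin] at h
  rw [div_eq_mul_inv]
  linarith

lemma mag_flipSet_univ (σ : Config n) : mag (flipSet univ σ) = -mag σ := by
  rw [mag_eq_weightedSpin, weightedSpin_flipSet_univ]

lemma cwRate_flipSet_self (σ : Config n) (j : Fin n) :
    cwRate β (flipSet {j} σ) j = cwRate β σ j := by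
  simp only [cwRate, mag_flipSet_singleton, spin_flipSet, mem_singleton, if_true]
  ring_nf

lemma abs_cwRate_sub_le (hβ : 0 ≤ β) (σ : Config n) {i j : Fin n} (hij : i ≠ j) :
    |cwRate β σ i - cwRate β (flipSet {j} σ) i| ≤ β / n := by
  simp only [cwRate, mag_flipSet_singleton, spin_flipSet, mem_singleton, hij, if_false]
  refine (abs_pPlus_sub_le _ _ _).trans_eq ?_
  rw [show mag σ - spin σ i / n - (mag σ - 2 * spin σ j / n - spin σ i / n)
    = 2 * spin σ j / n by ring, abs_div, abs_mul, abs_spin, Nat.abs_cast, abs_two,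
    abs_of_nonneg hβ]
  ring

lemma cwRate_flipSet_univ (σ : Config n) (i : Fin n) :
    cwRate β (flipSet univ σ) i = 1 - cwRate β σ i := by
  simp only [cwRate, pPlus, mag_flipSet_univ, spin_flipSet, mem_univ, if_true]
  rw [show β * (-mag σ - -spin σ i / n) = -(β * (mag σ - spin σ i / n)) by ring,
    Real.tanh_neg]
  ring

lemma sum_glauberKernel_mul (β : ℝ) (g : Config n → ℝ) (τ : Config n) :
    ∑ η, glauberKernel β n τ η * g η = heatBath (cwRate β) g τ := by
  simp only [glauberKernel, heatBath, one_div, mul_assoc, ← mul_sum, sum_mul]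
  rw [sum_comm]
  congr 1
  refine sum_congr rfl fun i _ => ?_
  simp only [ite_mul, zero_mul]
  rw [sum_ite_forall_ne_eq, Fintype.sum_bool]
  simp [resample, cwRate]

lemma sum_glauberLaw_mul (β : ℝ) (t : ℕ) (σ : Config n) (g : Config n → ℝ) :
    ∑ η, glauberLaw β n t σ η * g η = (heatBath (cwRate β))^[t] g σ := by
  induction t generalizing g with
  | zero => simp [glauberLaw]
  | succ t ih =>
    rw [Function.iterate_succ_apply, ← ih]
    simp only [glauberLaw, sum_mul, mul_assoc]
    rw [sum_comm]
    simp only [← mul_sum, sum_glauberKernel_mul]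

lemma glauberLaw_nonneg (β : ℝ) (t : ℕ) (σ η : Config n) : 0 ≤ glauberLaw β n t σ η := by
  induction t generalizing η with
  | zero => unfold glauberLaw; split_ifs <;> norm_num
  | succ t ih =>
    refine sum_nonneg fun τ _ => mul_nonneg (ih τ) (mul_nonneg (by positivity)
      (sum_nonneg fun i _ => ?_))
    have := pPlus_mem_Icc β (mag τ - spin τ i / n)
    split_ifs <;> linarith [this.1, this.2]

lemma sum_glauberLaw (hn : n ≠ 0) (β : ℝ) (t : ℕ) (σ : Config n) :
    ∑ η, glauberLaw β n t σ η = 1 := by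
  simpa [Function.iterate_fixed (heatBath_const hn 1)] using
    sum_glauberLaw_mul β t σ (fun _ => 1)

lemma one_sub_inv_add_div_pow_le_exp (hβ : 0 ≤ β) (t : ℕ) :
    (1 - (n : ℝ)⁻¹ + β / n) ^ t ≤ Real.exp (-(1 - β) * t / n) := by
  have h0 : 0 ≤ 1 - (n : ℝ)⁻¹ + β / n := by
    have := Nat.cast_inv_le_one (α := ℝ) n
    have : 0 ≤ β / n := by positivity
    linarith
  calc (1 - (n : ℝ)⁻¹ + β / n) ^ t ≤ Real.exp (-(1 - β) / n) ^ t := by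
        gcongr
        linarith [Real.add_one_le_exp (-(1 - β) / n), show -(1 - β) / (n : ℝ) + 1
          = 1 - (n : ℝ)⁻¹ + β / n by ring]
    _ = Real.exp (-(1 - β) * t / n) := by rw [← Real.exp_nat_mul]; ring_nf

end CurieWeiss

section HighTemperature

variable {n : ℕ} {β : ℝ}

lemma abs_expect_weightedSpin_le (hβ : 0 ≤ β) (a : Fin n → ℝ) (t : ℕ) (σ : Config n) :
    |∑ η, glauberLaw β n t σ η * weightedSpin a η|
      ≤ Real.exp (-(1 - β) * t / n) * ∑ j, |a j| := by
  rw [sum_glauberLaw_mul]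
  have h := abs_heatBath_iterate_le (cwRate_mem_Icc β) cwRate_flipSet_self
    (fun σ i j hij => abs_cwRate_sub_le hβ σ hij) (by positivity) cwRate_flipSet_univ
    (flipLipschitz_weightedSpin a) (weightedSpin_flipSet_univ a) t σ
  rw [← mul_sum, mul_div_assoc, mul_div_cancel_left₀ _ two_ne_zero] at h
  exact h.trans (mul_le_mul_of_nonneg_right (one_sub_inv_add_div_pow_le_exp hβ t)
    (sum_nonneg fun j _ => abs_nonneg _))

lemma variance_weightedSpin_le (hβ0 : 0 ≤ β) (hβ1 : β < 1) {a : Fin n → ℝ}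
    (ha : ∀ j, |a j| ≤ 1 / 2) (t : ℕ) (σ : Config n) :
    ∑ η, glauberLaw β n t σ η * weightedSpin a η ^ 2
      - (∑ η, glauberLaw β n t σ η * weightedSpin a η) ^ 2 ≤ n / (1 - β) := by
  rcases eq_or_ne n 0 with rfl | hn
  · simp [weightedSpin]
  have hn' : (0 : ℝ) < n := by positivity
  rw [sum_glauberLaw_mul β t σ (fun η => weightedSpin a η ^ 2), sum_glauberLaw_mul]
  refine (heatBath_iterate_variance_le hn (cwRate_mem_Icc β) cwRate_flipSet_self
    (fun σ i j hij => abs_cwRate_sub_le hβ0 σ hij) (by positivity) ?_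
    (flipLipschitz_weightedSpin a) (fun j => by linarith [ha j]) t σ).trans_eq ?_
  · rwa [div_eq_mul_inv, mul_lt_iff_lt_one_left (inv_pos.2 hn')]
  · field_simp

lemma expect_abs_weightedSpin_le (hβ0 : 0 ≤ β) (hβ1 : β < 1) {a : Fin n → ℝ}
    (ha : ∀ j, |a j| ≤ 1 / 2) (t : ℕ) (σ : Config n) :
    ∑ η, glauberLaw β n t σ η * |weightedSpin a η|
      ≤ √(n / (1 - β)) + Real.exp (-(1 - β) * t / n) * ∑ j, |a j| := by
  rcases eq_or_ne n 0 with rfl | hn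
  · simp [weightedSpin]
  exact (sum_mul_abs_le_sqrt_variance_add_abs univ (glauberLaw_nonneg β t σ)
    (sum_glauberLaw hn β t σ)).trans (add_le_add
      (Real.sqrt_le_sqrt (variance_weightedSpin_le hβ0 hβ1 ha t σ))
      (abs_expect_weightedSpin_le hβ0 a t σ))

end HighTemperature

/-- Decay of expected spin values at high temperature (`0 ≤ β < 1`):
(i) for every start `σ`, time `t` and vertex `i`,
`|E_σ[S(X_t)]| ≤ 2 e^{-(1-β)t/n}` and `|E_σ[X_t(i)]| ≤ 2 e^{-(1-β)t/n}`;
(ii) for every set of vertices `A`, with `M_t(A) = (1/2) ∑_{i∈A} X_t(i)`,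
`|E_σ[M_t(A)]| ≤ |A| e^{-(1-β)t/n}` and `Var(M_t(A)) ≤ c n` for a constant
`c > 0` depending only on `β`;
(iii) for a constant `C > 0` depending only on `β`, every `A` and every `σ`,
`E_σ[|M_t(A)|] ≤ n e^{-(1-β)t/n} + C √n`. -/
theorem spin_decay (β : ℝ) (hβ0 : 0 ≤ β) (hβ1 : β < 1) :
    (∀ (n : ℕ) (σ : Config n) (t : ℕ) (i : Fin n),
      |∑ η, glauberLaw β n t σ η * mag η| ≤
          2 * Real.exp (-(1 - β) * t / n) ∧
      |∑ η, glauberLaw β n t σ η * spin η i| ≤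
          2 * Real.exp (-(1 - β) * t / n)) ∧
    (∃ c > (0 : ℝ), ∀ (n : ℕ) (A : Finset (Fin n)) (σ : Config n) (t : ℕ),
      |∑ η, glauberLaw β n t σ η * ((∑ i ∈ A, spin η i) / 2)| ≤
          (A.card : ℝ) * Real.exp (-(1 - β) * t / n) ∧
      (∑ η, glauberLaw β n t σ η * ((∑ i ∈ A, spin η i) / 2) ^ 2) -
          (∑ η, glauberLaw β n t σ η * ((∑ i ∈ A, spin η i) / 2)) ^ 2 ≤
        c * n) ∧
    (∃ C > (0 : ℝ), ∀ (n : ℕ) (A : Finset (Fin n)) (σ : Config n) (t : ℕ),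
      ∑ η, glauberLaw β n t σ η * |(∑ i ∈ A, spin η i) / 2| ≤
        n * Real.exp (-(1 - β) * t / n) + C * Real.sqrt n) := by
  have hC : 0 < 1 / (1 - β) := one_div_pos.2 (sub_pos.2 hβ1)
  have hexp : ∀ n t : ℕ, 0 < Real.exp (-(1 - β) * t / n) := fun _ _ => Real.exp_pos _
  refine ⟨fun n σ t i => ⟨?_, ?_⟩, ⟨1 / (1 - β), hC, fun n A σ t => ⟨?_, ?_⟩⟩,
    ⟨√(1 / (1 - β)), Real.sqrt_pos.2 hC, fun n A σ t => ?_⟩⟩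
  · have hsum : ∑ _j : Fin n, |(n : ℝ)⁻¹| = 1 := by simp [(Fin.pos i).ne']
    rw [mag_eq_weightedSpin]
    refine (abs_expect_weightedSpin_le hβ0 _ t σ).trans ?_
    rw [hsum, mul_one]
    linarith [hexp n t]
  · have hsum : ∑ j, |(Pi.single i 1 : Fin n → ℝ) j| = 1 := by simp [Pi.single_apply, apply_ite]
    simp_rw [spin_eq_weightedSpin _ i]
    refine (abs_expect_weightedSpin_le hβ0 _ t σ).trans ?_
    rw [hsum, mul_one]
    linarith [hexp n t]
  · simp_rw [sum_spin_div_two_eq_weightedSpin]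
    refine (abs_expect_weightedSpin_le hβ0 _ t σ).trans ?_
    rw [sum_abs_halfIndicator A]
    nlinarith [hexp n t, (Nat.cast_nonneg A.card : (0 : ℝ) ≤ A.card)]
  · simp_rw [sum_spin_div_two_eq_weightedSpin]
    exact (variance_weightedSpin_le hβ0 hβ1 (abs_halfIndicator_le A) t σ).trans_eq (by ring)
  · simp_rw [sum_spin_div_two_eq_weightedSpin]
    refine (expect_abs_weightedSpin_le hβ0 hβ1 (abs_halfIndicator_le A) t σ).trans ?_
    have hcard : (A.card : ℝ) / 2 ≤ n := by
      have : (A.card : ℝ) ≤ n := by simpa using A.card_le_univ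
      linarith [(Nat.cast_nonneg A.card : (0 : ℝ) ≤ A.card)]
    rw [sum_abs_halfIndicator A, div_eq_mul_one_div (n : ℝ), mul_comm, Real.sqrt_mul hC.le]
    nlinarith [hexp n t]

end

end CW
end

section
/- Total variation is preserved by the two-coordinate projection: fix β ≥ 0, n, and a configuration σ₀ ∈ Ω. For σ ∈ Ω define U(σ) = |{i : σ(i) = σ₀(i) = 1}| and V(σ) = |{i : σ(i) = σ₀(i) = −1}|. Let (X_t) be the Glauber dynamics started from σ₀, let (U_t, V_t) = (U(X_t), V(X_t)), and let π₂ be the law of (U(σ), V(σ)) when σ is distributed according to μ. Then for every t ≥ 0, ||P_{σ₀}(X_t ∈ ·) − μ||_TV = ||P_{σ₀}((U_t, V_t) ∈ ·) − π₂||_TV. -/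
open Filter Real

namespace CW

noncomputable section

/-- `U(σ) = #{i : σ(i) = σ₀(i) = 1}`. -/
def Ucoord {n : ℕ} (σ₀ σ : Config n) : ℕ :=
  (Finset.univ.filter fun i => σ i = true ∧ σ₀ i = true).card

/-- `V(σ) = #{i : σ(i) = σ₀(i) = -1}`. -/
def Vcoord {n : ℕ} (σ₀ σ : Config n) : ℕ :=
  (Finset.univ.filter fun i => σ i = false ∧ σ₀ i = false).card

/-- Total variation distance between two distributions on `ℕ × ℕ`. -/
def tvDistNat (μ ν : ℕ × ℕ → ℝ) : ℝ := (∑' p : ℕ × ℕ, |μ p - ν p|) / 2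


/-! ### Auxiliary lemmas -/

lemma spin_comp {n} (σ : Config n) (e : Equiv.Perm (Fin n)) (i : Fin n) :
    spin (σ ∘ e) i = spin σ (e i) := rfl

lemma mag_comp {n} (σ : Config n) (e : Equiv.Perm (Fin n)) :
    mag (σ ∘ e) = mag σ := by
  unfold mag; simp only [spin_comp]; rw [Equiv.sum_comp e (spin σ)]

lemma cwExponent_eq {n} (β : ℝ) (σ : Config n) :
    cwExponent β σ = (β / n) * (((∑ i, spin σ i)^2 - n) / 2) := by
  unfold cwExponent
  congr 1
  have h2 : ∀ i j : Fin n, spin σ i * spin σ j =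
      (if i < j then spin σ i * spin σ j else 0) +
      ((if j < i then spin σ i * spin σ j else 0) +
      (if i = j then (1:ℝ) else 0)) := by
    intro i j
    rcases lt_trichotomy i j with h|h|h
    · simp [h, h.ne, asymm h, not_lt.mpr h.le]
    · subst h; simp [lt_irrefl, spin]; split <;> norm_num
    · simp [h, h.ne', asymm h]
  have h1 : (∑ i, spin σ i)^2 =
      (∑ i : Fin n, ∑ j : Fin n, if i < j then spin σ i * spin σ j else 0) +
      ((∑ i : Fin n, ∑ j : Fin n, if j < i then spin σ i * spin σ j else 0) +
       (∑ i : Fin n, ∑ j : Fin n, if i = j then (1:ℝ) else 0)) := by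
    rw [sq, Finset.sum_mul_sum]
    simp only [← Finset.sum_add_distrib]
    exact Finset.sum_congr rfl fun i _ => Finset.sum_congr rfl fun j _ => h2 i j
  have hsw : (∑ i : Fin n, ∑ j : Fin n, if j < i then spin σ i * spin σ j else 0) =
      ∑ i : Fin n, ∑ j : Fin n, if i < j then spin σ i * spin σ j else 0 := by
    rw [Finset.sum_comm]
    exact Finset.sum_congr rfl fun i _ => Finset.sum_congr rfl fun j _ => by
      rw [mul_comm]
  have hdiag : (∑ i : Fin n, ∑ j : Fin n, if i = j then (1:ℝ) else 0) = n := by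
    simp [Finset.sum_ite_eq]
  rw [hsw, hdiag] at h1
  linarith

lemma cwExponent_comp {n} (β : ℝ) (σ : Config n) (e : Equiv.Perm (Fin n)) :
    cwExponent β (σ ∘ e) = cwExponent β σ := by
  rw [cwExponent_eq, cwExponent_eq]
  simp only [spin_comp]
  rw [Equiv.sum_comp e (spin σ)]

lemma glauberKernel_comp {n} (β : ℝ) (σ η : Config n) (e : Equiv.Perm (Fin n)) :
    glauberKernel β n (σ ∘ e) (η ∘ e) = glauberKernel β n σ η := by
  unfold glauberKernel
  congr 1
  rw [← Equiv.sum_comp e (fun i => if ∀ j, j ≠ i → η j = σ j then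
      (if η i then pPlus β (mag σ - spin σ i / n)
       else 1 - pPlus β (mag σ - spin σ i / n)) else 0)]
  refine Finset.sum_congr rfl fun i _ => ?_
  have hc : (∀ j, j ≠ i → η (e j) = σ (e j)) ↔ (∀ j, j ≠ e i → η j = σ j) := by
    constructor
    · intro h j hj
      have := h (e.symm j) (fun hh => hj (by rw [← hh, Equiv.apply_symm_apply]))
      simpa using this
    · intro h j hj
      exact h (e j) (fun hh => hj (e.injective hh))
  rw [mag_comp]
  simp only [Function.comp_apply, spin_comp]
  by_cases hcond : ∀ j, j ≠ e i → η j = σ j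
  · rw [if_pos hcond, if_pos (hc.mpr hcond)]
  · rw [if_neg hcond, if_neg (fun h => hcond (hc.mp h))]

/-- Pre-composition with a permutation as an equivalence on configurations. -/
def precompEquiv {n} (e : Equiv.Perm (Fin n)) : Config n ≃ Config n where
  toFun τ := τ ∘ e
  invFun τ := τ ∘ e.symm
  left_inv τ := by funext i; simp
  right_inv τ := by funext i; simp

lemma glauberLaw_comp {n} (β : ℝ) (t : ℕ) (σ η : Config n) (e : Equiv.Perm (Fin n)) :
    glauberLaw β n t (σ ∘ e) (η ∘ e) = glauberLaw β n t σ η := by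
  induction t generalizing η with
  | zero =>
    simp only [glauberLaw]
    congr 1
    simp only [eq_iff_iff]
    constructor
    · intro h; funext i
      have := congrFun h (e.symm i); simpa using this
    · intro h; subst h; rfl
  | succ t ih =>
    simp only [glauberLaw]
    rw [show (∑ τ : Config n, glauberLaw β n t (σ ∘ e) τ * glauberKernel β n τ (η ∘ e))
        = ∑ τ : Config n, glauberLaw β n t (σ ∘ e) (precompEquiv e τ) *
            glauberKernel β n (precompEquiv e τ) (η ∘ e) from
      (Equiv.sum_comp (precompEquiv e) _).symm]
    refine Finset.sum_congr rfl fun τ _ => ?_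
    have h1 : precompEquiv e τ = τ ∘ e := rfl
    rw [h1, ih, glauberKernel_comp]

lemma exists_perm_comp_eq {α γ : Type*} [Fintype α] [DecidableEq γ] (f g : α → γ)
    (h : ∀ p, Fintype.card {x // f x = p} = Fintype.card {x // g x = p}) :
    ∃ e : Equiv.Perm α, ∀ x, f (e x) = g x := by
  classical
  let E : (Σ p, {x // g x = p}) ≃ (Σ p, {x // f x = p}) :=
    Equiv.sigmaCongrRight fun p => Fintype.equivOfCardEq (h p).symm
  refine ⟨(Equiv.sigmaFiberEquiv g).symm.trans (E.trans (Equiv.sigmaFiberEquiv f)), fun x => ?_⟩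
  simp only [Equiv.trans_apply]
  have h1 : (Equiv.sigmaFiberEquiv g).symm x = ⟨g x, x, rfl⟩ := rfl
  rw [h1]
  have h2 : E ⟨g x, x, rfl⟩ = ⟨g x, (Fintype.equivOfCardEq (h (g x)).symm) ⟨x, rfl⟩⟩ := rfl
  rw [h2]
  exact ((Fintype.equivOfCardEq (h (g x)).symm) ⟨x, rfl⟩).2

lemma fiber_card_eq {n : ℕ} (σ₀ η η' : Config n)
    (hU : Ucoord σ₀ η = Ucoord σ₀ η') (hV : Vcoord σ₀ η = Vcoord σ₀ η')
    (p : Bool × Bool) :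
    Fintype.card {i // (σ₀ i, η i) = p} = Fintype.card {i // (σ₀ i, η' i) = p} := by
  classical
  have key : ∀ (τ : Config n) (b c : Bool),
      Fintype.card {i // (σ₀ i, τ i) = (b, c)}
        = (Finset.univ.filter fun i => σ₀ i = b ∧ τ i = c).card := by
    intro τ b c
    rw [Fintype.card_subtype]
    congr 1
    ext i
    simp [Prod.ext_iff, and_comm]
  have part : ∀ (τ : Config n) (b : Bool),
      (Finset.univ.filter fun i => σ₀ i = b ∧ τ i = true).card
        + (Finset.univ.filter fun i => σ₀ i = b ∧ τ i = false).card
        = (Finset.univ.filter fun i : Fin n => σ₀ i = b).card := by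
    intro τ b
    rw [← Finset.filter_filter, ← Finset.filter_filter]
    have := Finset.card_filter_add_card_filter_not
      (s := Finset.univ.filter fun i : Fin n => σ₀ i = b) (fun i => τ i = true)
    simpa using this
  have hU' : (Finset.univ.filter fun i => σ₀ i = true ∧ η i = true).card
      = (Finset.univ.filter fun i => σ₀ i = true ∧ η' i = true).card := by
    have e1 : ∀ τ : Config n, (Finset.univ.filter fun i => σ₀ i = true ∧ τ i = true)
        = (Finset.univ.filter fun i => τ i = true ∧ σ₀ i = true) := by
      intro τ; ext i; simp [and_comm]
    rw [e1, e1]; exact hU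
  have hV' : (Finset.univ.filter fun i => σ₀ i = false ∧ η i = false).card
      = (Finset.univ.filter fun i => σ₀ i = false ∧ η' i = false).card := by
    have e1 : ∀ τ : Config n, (Finset.univ.filter fun i => σ₀ i = false ∧ τ i = false)
        = (Finset.univ.filter fun i => τ i = false ∧ σ₀ i = false) := by
      intro τ; ext i; simp [and_comm]
    rw [e1, e1]; exact hV
  obtain ⟨b, c⟩ := p
  match b, c with
  | true, true => rw [key, key]; exact hU'
  | false, false => rw [key, key]; exact hV'
  | true, false =>
    rw [key, key]
    have := (part η true).trans (part η' true).symm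
    omega
  | false, true =>
    rw [key, key]
    have := (part η false).trans (part η' false).symm
    omega

lemma exists_perm_of_UV {n : ℕ} (σ₀ η η' : Config n)
    (hU : Ucoord σ₀ η = Ucoord σ₀ η') (hV : Vcoord σ₀ η = Vcoord σ₀ η') :
    ∃ e : Equiv.Perm (Fin n), σ₀ ∘ e = σ₀ ∧ η ∘ e = η' := by
  obtain ⟨e, he⟩ := exists_perm_comp_eq (fun i => (σ₀ i, η i)) (fun i => (σ₀ i, η' i))
    (fiber_card_eq σ₀ η η' hU hV)
  refine ⟨e, funext fun i => ?_, funext fun i => ?_⟩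
  · exact (Prod.ext_iff.mp (he i)).1
  · exact (Prod.ext_iff.mp (he i)).2

lemma diff_const_on_fibers {n : ℕ} (β : ℝ) (t : ℕ) (σ₀ η η' : Config n)
    (hU : Ucoord σ₀ η = Ucoord σ₀ η') (hV : Vcoord σ₀ η = Vcoord σ₀ η') :
    glauberLaw β n t σ₀ η = glauberLaw β n t σ₀ η' ∧
      cwMeasure β n η = cwMeasure β n η' := by
  obtain ⟨e, hσ, hη⟩ := exists_perm_of_UV σ₀ η η' hU hV
  constructor
  · have := glauberLaw_comp β t σ₀ η e
    rw [hσ, hη] at this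
    exact this.symm
  · unfold cwMeasure
    have := cwExponent_comp β η e
    rw [hη] at this
    rw [this]

/-- Total variation is preserved by the two-coordinate projection: for the
Glauber dynamics started from `σ₀`, the total variation distance of the law
of `X_t` to `μ` equals the total variation distance of the law of
`(U_t, V_t) = (U(X_t), V(X_t))` to `π₂`, the law of `(U, V)` under `μ`. -/
theorem two_coordinate_tv (β : ℝ) (hβ : 0 ≤ β) (n : ℕ) (σ₀ : Config n)
    (t : ℕ) :
    tvDist (glauberLaw β n t σ₀) (cwMeasure β n) =
      tvDistNat
        (fun p => ∑ η : Config n,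
          if (Ucoord σ₀ η, Vcoord σ₀ η) = p then glauberLaw β n t σ₀ η else 0)
        (fun p => ∑ η : Config n,
          if (Ucoord σ₀ η, Vcoord σ₀ η) = p then cwMeasure β n η else 0) := by
  classical
  set f := glauberLaw β n t σ₀ with hf
  set g := cwMeasure β n with hg
  set F : Config n → ℕ × ℕ := fun η => (Ucoord σ₀ η, Vcoord σ₀ η) with hF
  have hconst : ∀ η η' : Config n, F η = F η' → f η - g η = f η' - g η' := by
    intro η η' h
    have h1 := diff_const_on_fibers β t σ₀ η η'
      (congrArg Prod.fst h) (congrArg Prod.snd h)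
    simp only [hf, hg, h1.1, h1.2]
  unfold tvDist tvDistNat
  congr 1
  have hdiff : ∀ p : ℕ × ℕ,
      (∑ η : Config n, if F η = p then f η else 0) -
        (∑ η : Config n, if F η = p then g η else 0)
      = ∑ η : Config n, if F η = p then f η - g η else 0 := by
    intro p
    rw [← Finset.sum_sub_distrib]
    exact Finset.sum_congr rfl fun η _ => by split <;> simp
  have habs : ∀ p : ℕ × ℕ,
      |∑ η : Config n, if F η = p then f η - g η else 0|
        = ∑ η : Config n, if F η = p then |f η - g η| else 0 := by
    intro p
    rw [← Finset.sum_filter, ← Finset.sum_filter]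
    rcases (Finset.univ.filter fun η : Config n => F η = p).eq_empty_or_nonempty with
      hs | ⟨η₀, hη₀⟩
    · rw [hs]; simp
    · have hmem : ∀ η ∈ Finset.univ.filter fun η : Config n => F η = p,
          f η - g η = f η₀ - g η₀ := by
        intro η hη
        exact hconst η η₀
          (((Finset.mem_filter.mp hη).2).trans ((Finset.mem_filter.mp hη₀).2).symm)
      rw [Finset.sum_congr rfl hmem,
        Finset.sum_congr rfl fun η hη => congrArg abs (hmem η hη)]
      rw [Finset.sum_const, Finset.sum_const, abs_nsmul]
  have hsupp : ∀ p ∉ Finset.image F Finset.univ,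
      |(∑ η : Config n, if F η = p then f η else 0) -
        (∑ η : Config n, if F η = p then g η else 0)| = 0 := by
    intro p hp
    have hz : ∀ η : Config n, F η ≠ p := by
      intro η hη
      exact hp (hη ▸ Finset.mem_image_of_mem F (Finset.mem_univ η))
    rw [hdiff]
    rw [Finset.sum_eq_zero fun η _ => if_neg (hz η)]
    simp
  rw [tsum_eq_sum (s := Finset.image F Finset.univ) hsupp]
  have : ∀ p ∈ Finset.image F Finset.univ,
      |(∑ η : Config n, if F η = p then f η else 0) -
        (∑ η : Config n, if F η = p then g η else 0)|
      = ∑ η : Config n, if F η = p then |f η - g η| else 0 := by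
    intro p _
    rw [hdiff, habs]
  rw [Finset.sum_congr rfl this]
  simp only [← Finset.sum_filter]
  rw [Finset.sum_fiberwise_of_maps_to
    (fun η _ => Finset.mem_image_of_mem F (Finset.mem_univ η))
    (fun η => |f η - g η|)]


end

end CW
end
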